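/- arXiv:1611.01063 — 4 statements merged into one kernel-verified Lean document; each statement's English description precedes it below -/
import Mathlib

section
/- Let $\{X_i\}_{i=0}^\infty$ be an $\epsilon$-repulsing supermartingale for a stopping time $T$ with $c$-bounded differences, with $\epsilon > 0$, $c > 0$, and deterministic initial value $X_0 = m_0 < 0$. Then for every $n \in \mathbb{N}$, $\mathbb{P}(T = n) \leq \alpha \cdot \gamma^n$, where $\gamma = e^{-\epsilon^2/(2(c+\epsilon)^2)}$ and $\alpha = e^{\epsilon m_0/(c+\epsilon)^2}$. -/
open MeasureTheory

lemma exp_le_cosh_aux (l b d : ℝ) (hb : 0 < b) (hd : |d| ≤ b) :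
    Real.exp (l * d) ≤ Real.cosh (l * b) + (d / b) * Real.sinh (l * b) := by
  obtain ⟨h1, h2⟩ := abs_le.mp hd
  have hb' : b ≠ 0 := hb.ne'
  have ha1 : (0:ℝ) ≤ (b - d) / (2 * b) := by apply div_nonneg <;> linarith
  have ha2 : (0:ℝ) ≤ (b + d) / (2 * b) := by apply div_nonneg <;> linarith
  have hab : (b - d) / (2 * b) + (b + d) / (2 * b) = 1 := by field_simp; ring
  have key := convexOn_exp.2 (Set.mem_univ (-(l * b))) (Set.mem_univ (l * b)) ha1 ha2 hab
  simp only [smul_eq_mul] at key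
  calc Real.exp (l * d)
      = Real.exp ((b - d) / (2 * b) * (-(l * b)) + (b + d) / (2 * b) * (l * b)) := by
        congr 1; field_simp; ring
    _ ≤ (b - d) / (2 * b) * Real.exp (-(l * b)) + (b + d) / (2 * b) * Real.exp (l * b) := key
    _ = Real.cosh (l * b) + (d / b) * Real.sinh (l * b) := by
        rw [Real.cosh_eq, Real.sinh_eq]; field_simp; ring

/-- Per-step tail bound for `ε`-repulsing supermartingales (Lemma 2 of the paper). -/
theorem repulsing_supermartingale_step_bound
    {Ω : Type*} {m : MeasurableSpace Ω} {μ : Measure Ω} [IsProbabilityMeasure μ]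
    (ℱ : Filtration ℕ m) (X : ℕ → Ω → ℝ) (T : Ω → ℕ∞) (ε c m₀ : ℝ)
    (hε : 0 < ε) (hc : 0 < c) (hm₀ : m₀ < 0)
    (hstop : ∀ n : ℕ, MeasurableSet[ℱ n] {ω | T ω ≤ n})
    (hsup : Supermartingale X ℱ μ)
    (hdec : ∀ i : ℕ,
      μ[X (i + 1)|ℱ i] ≤ᵐ[μ]
        fun ω => X i ω - Set.indicator {ω | (i : ℕ∞) < T ω} (fun _ => ε) ω)
    (hrep : ∀ ω (j : ℕ), T ω = j → 0 ≤ X j ω)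
    (hbdd : ∀ i, ∀ᵐ ω ∂μ, |X (i + 1) ω - X i ω| < c)
    (hinit : ∀ ω, X 0 ω = m₀) :
    ∀ n : ℕ,
      μ {ω | T ω = n} ≤
        ENNReal.ofReal (Real.exp (ε * m₀ / (c + ε) ^ 2) *
          Real.exp (-(ε ^ 2) / (2 * (c + ε) ^ 2)) ^ n) := by
  set b : ℝ := c + ε with hbdef
  have hb : 0 < b := by positivity
  set l : ℝ := ε / b ^ 2 with hldef
  have hl : 0 < l := by positivity
  -- stopped compensated process
  set Y : ℕ → Ω → ℝ :=
    fun n ω => X (min (n : ℕ∞) (T ω)).toNat ω + ε * (min (n : ℕ∞) (T ω)).toNat with hYdef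
  set D : ℕ → Ω → ℝ := fun n ω =>
    (X (n + 1) ω - X n ω + ε) *
      Set.indicator {ω | (n : ℕ∞) < T ω} (fun _ => (1:ℝ)) ω with hDdef
  have hY0 : ∀ ω, Y 0 ω = m₀ := by
    intro ω
    simp [hYdef, hinit ω]
  have hYsucc : ∀ n ω, Y (n + 1) ω = Y n ω + D n ω := by
    intro n ω
    by_cases h : (n : ℕ∞) < T ω
    · have h1 : min (n : ℕ∞) (T ω) = (n : ℕ∞) := min_eq_left h.le
      have h2 : min ((n+1 : ℕ) : ℕ∞) (T ω) = ((n+1 : ℕ) : ℕ∞) := by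
        apply min_eq_left
        have := Order.add_one_le_of_lt h
        push_cast
        exact_mod_cast this
      have hi : Set.indicator {ω | (n : ℕ∞) < T ω} (fun _ => (1:ℝ)) ω = 1 :=
        by simp [Set.indicator_apply, Set.mem_setOf_eq, h]
      simp only [hYdef, hDdef, h1, h2, ENat.toNat_coe, hi]
      push_cast
      ring
    · have hle : T ω ≤ (n : ℕ∞) := not_lt.mp h
      have h1 : min (n : ℕ∞) (T ω) = T ω := min_eq_right hle
      have h2 : min ((n+1 : ℕ) : ℕ∞) (T ω) = T ω := by
        apply min_eq_right (hle.trans (by exact_mod_cast Nat.cast_le.mpr (Nat.le_succ n)))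
      have hi : Set.indicator {ω | (n : ℕ∞) < T ω} (fun _ => (1:ℝ)) ω = 0 :=
        by simp [Set.indicator_apply, Set.mem_setOf_eq, h]
      simp only [hYdef, hDdef, h1, h2, hi]
      ring
  have hTset : ∀ n : ℕ, MeasurableSet[ℱ n] {ω | (n : ℕ∞) < T ω} := by
    intro n
    have := (hstop n).compl
    convert this using 1
    ext ω
    simp [not_le]
  have hYmeas : ∀ n, StronglyMeasurable[ℱ n] (Y n) := by
    intro n
    induction n with
    | zero =>
      have : Y 0 = fun _ => m₀ := funext hY0
      rw [this]; exact stronglyMeasurable_const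
    | succ n ih =>
      have : Y (n + 1) = fun ω => Y n ω + D n ω := funext (hYsucc n)
      rw [this]
      refine (ih.mono (ℱ.mono n.le_succ)).add ?_
      exact (((hsup.stronglyAdapted (n+1)).sub ((hsup.stronglyAdapted n).mono (ℱ.mono n.le_succ))).add
        stronglyMeasurable_const).mul
        ((stronglyMeasurable_const.indicator (hTset n)).mono (ℱ.mono n.le_succ))
  have hDmeasm : ∀ n, StronglyMeasurable (D n) := by
    intro n
    exact (((hsup.stronglyAdapted (n+1)).mono (ℱ.le (n+1))).sub
      ((hsup.stronglyAdapted n).mono (ℱ.le n))).add stronglyMeasurable_const |>.mul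
      (stronglyMeasurable_const.indicator ((ℱ.le n) _ (hTset n)))
  have hDbound : ∀ n, ∀ᵐ ω ∂μ, |D n ω| ≤ b := by
    intro n
    filter_upwards [hbdd n] with ω hω
    have h1 : |X (n+1) ω - X n ω + ε| ≤ b := by
      rw [hbdef]
      have := abs_add_le (X (n+1) ω - X n ω) ε
      rw [abs_of_pos hε] at this
      linarith
    by_cases h : ω ∈ {ω | (n : ℕ∞) < T ω}
    · simpa [hDdef, Set.indicator_of_mem h] using h1
    · simp [hDdef, Set.indicator_of_notMem h, hb.le]
  have hYbound : ∀ n, ∀ᵐ ω ∂μ, |Y n ω| ≤ |m₀| + n * b := by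
    intro n
    induction n with
    | zero =>
      filter_upwards with ω
      simp [hY0 ω]
    | succ n ih =>
      filter_upwards [ih, hDbound n] with ω h1 h2
      rw [hYsucc n ω]
      have := abs_add_le (Y n ω) (D n ω)
      push_cast
      nlinarith
  have hEmeas : ∀ n, StronglyMeasurable[ℱ n] (fun ω => Real.exp (l * Y n ω)) := fun n =>
    Real.continuous_exp.comp_stronglyMeasurable ((hYmeas n).const_mul l)
  have hEbound : ∀ n, ∀ᵐ ω ∂μ, ‖Real.exp (l * Y n ω)‖ ≤ Real.exp (l * (|m₀| + n * b)) := by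
    intro n
    filter_upwards [hYbound n] with ω hω
    rw [Real.norm_eq_abs, abs_of_pos (Real.exp_pos _)]
    exact Real.exp_le_exp.mpr (mul_le_mul_of_nonneg_left ((le_abs_self _).trans hω) hl.le)
  have hEint : ∀ n, Integrable (fun ω => Real.exp (l * Y n ω)) μ := fun n =>
    (integrable_const (Real.exp (l * (|m₀| + n * b)))).mono'
      ((hEmeas n).mono (ℱ.le n)).aestronglyMeasurable (hEbound n)
  have hEDint : ∀ n, Integrable (fun ω => Real.exp (l * Y n ω) * D n ω) μ := by
    intro n
    refine (integrable_const (Real.exp (l * (|m₀| + n * b)) * b)).mono'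
      (((hEmeas n).mono (ℱ.le n)).mul (hDmeasm n)).aestronglyMeasurable ?_
    filter_upwards [hEbound n, hDbound n] with ω h1 h2
    rw [Real.norm_eq_abs, abs_mul]
    rw [Real.norm_eq_abs] at h1
    exact mul_le_mul h1 h2 (abs_nonneg _) (Real.exp_pos _).le
  -- key: ∫ exp(l Y n) * D n ≤ 0
  have hkey : ∀ n, ∫ ω, Real.exp (l * Y n ω) * D n ω ∂μ ≤ 0 := by
    intro n
    set f : Ω → ℝ := fun ω =>
      Real.exp (l * Y n ω) * Set.indicator {ω | (n : ℕ∞) < T ω} (fun _ => (1:ℝ)) ω with hfdef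
    set g : Ω → ℝ := fun ω => X (n + 1) ω - X n ω + ε with hgdef
    have hfg : ∀ ω, Real.exp (l * Y n ω) * D n ω = f ω * g ω := by
      intro ω; simp only [hfdef, hgdef, hDdef]; ring
    have hfmeas : StronglyMeasurable[ℱ n] f :=
      (hEmeas n).mul (stronglyMeasurable_const.indicator (hTset n))
    have hfbound : ∀ᵐ ω ∂μ, ‖f ω‖ ≤ Real.exp (l * (|m₀| + n * b)) := by
      filter_upwards [hEbound n] with ω h1
      rw [Real.norm_eq_abs, abs_mul]
      rw [Real.norm_eq_abs] at h1
      have : |Set.indicator {ω | (n : ℕ∞) < T ω} (fun _ => (1:ℝ)) ω| ≤ 1 := by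
        by_cases h : ω ∈ {ω | (n : ℕ∞) < T ω} <;>
          simp [Set.indicator_of_mem, Set.indicator_of_notMem, h]
      calc |Real.exp (l * Y n ω)| * |Set.indicator {ω | (n : ℕ∞) < T ω} (fun _ => (1:ℝ)) ω|
          ≤ Real.exp (l * (|m₀| + n * b)) * 1 :=
            mul_le_mul h1 this (abs_nonneg _) (Real.exp_pos _).le
        _ = _ := mul_one _
    have hgint : Integrable g μ :=
      (((hsup.integrable (n+1)).sub (hsup.integrable n)).add (integrable_const ε))
    have hfgint : Integrable (f * g) μ := by
      have : f * g = fun ω => Real.exp (l * Y n ω) * D n ω := by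
        ext ω; exact (hfg ω).symm
      rw [this]; exact hEDint n
    have hpull : μ[f * g|ℱ n] =ᵐ[μ] f * μ[g|ℱ n] :=
      condExp_stronglyMeasurable_mul_of_bound (ℱ.le n) hfmeas hgint _ hfbound
    have hcondg : μ[g|ℱ n] ≤ᵐ[μ]
        fun ω => ε - Set.indicator {ω | (n : ℕ∞) < T ω} (fun _ => ε) ω := by
      have h1 : μ[g|ℱ n] =ᵐ[μ] fun ω => (μ[X (n+1)|ℱ n]) ω - X n ω + ε := by
        calc μ[g|ℱ n] =ᵐ[μ] μ[fun ω => X (n+1) ω - X n ω|ℱ n] + μ[fun _ => ε|ℱ n] :=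
              condExp_add ((hsup.integrable (n+1)).sub (hsup.integrable n)) (integrable_const ε) _
          _ =ᵐ[μ] fun ω => (μ[X (n+1)|ℱ n]) ω - X n ω + ε := by
              have h2 : μ[fun ω => X (n+1) ω - X n ω|ℱ n] =ᵐ[μ] μ[X (n+1)|ℱ n] - μ[X n|ℱ n] :=
                condExp_sub (hsup.integrable (n+1)) (hsup.integrable n) _
              have h3 : (μ[X n|ℱ n] : Ω → ℝ) = X n :=
                condExp_of_stronglyMeasurable (ℱ.le n) (hsup.stronglyAdapted n) (hsup.integrable n)
              have h4 : (μ[fun _ => ε|ℱ n] : Ω → ℝ) = fun _ => ε := condExp_const (ℱ.le n) ε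
              filter_upwards [h2] with ω hω2
              simp only [Pi.add_apply, Pi.sub_apply]
              simp only [Pi.add_apply, Pi.sub_apply, hω2, h3, h4]
      filter_upwards [h1, hdec n] with ω hω1 hω2
      rw [hω1]
      linarith [hω2]
    have hfnonneg : ∀ ω, 0 ≤ f ω := by
      intro ω
      apply mul_nonneg (Real.exp_pos _).le
      exact Set.indicator_nonneg (fun _ _ => zero_le_one) ω
    calc ∫ ω, Real.exp (l * Y n ω) * D n ω ∂μ = ∫ ω, f ω * g ω ∂μ := by
          congr 1; ext ω; exact hfg ω
      _ = ∫ ω, (μ[f * g|ℱ n]) ω ∂μ := (integral_condExp (ℱ.le n) (f := f * g)).symm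
      _ = ∫ ω, f ω * (μ[g|ℱ n]) ω ∂μ := integral_congr_ae (hpull.mono fun ω h => by
            simpa using h)
      _ ≤ 0 := by
          apply integral_nonpos_of_ae
          filter_upwards [hcondg] with ω hω
          by_cases h : ω ∈ {ω | (n : ℕ∞) < T ω}
          · have : (μ[g|ℱ n]) ω ≤ 0 := by
              have := hω
              simp only [Set.indicator_of_mem h] at this
              linarith
            exact mul_nonpos_of_nonneg_of_nonpos (hfnonneg ω) this
          · have : f ω = 0 := by simp [hfdef, Set.indicator_of_notMem h]
            simp [this]
  have hcosh : 0 < Real.cosh (l * b) := Real.cosh_pos _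
  have hsinh : 0 < Real.sinh (l * b) := Real.sinh_pos_iff.mpr (by positivity)
  -- recursion
  have hrec : ∀ n, ∫ ω, Real.exp (l * Y (n+1) ω) ∂μ ≤
      Real.cosh (l * b) * ∫ ω, Real.exp (l * Y n ω) ∂μ := by
    intro n
    have hRHSint : Integrable (fun ω =>
        Real.cosh (l * b) * Real.exp (l * Y n ω) +
          (Real.sinh (l * b) / b) * (Real.exp (l * Y n ω) * D n ω)) μ :=
      ((hEint n).const_mul _).add ((hEDint n).const_mul _)
    have hmono : ∫ ω, Real.exp (l * Y (n+1) ω) ∂μ ≤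
        ∫ ω, (Real.cosh (l * b) * Real.exp (l * Y n ω) +
          (Real.sinh (l * b) / b) * (Real.exp (l * Y n ω) * D n ω)) ∂μ := by
      apply integral_mono_ae (hEint (n+1)) hRHSint
      filter_upwards [hDbound n] with ω hω
      rw [hYsucc n ω, mul_add, Real.exp_add]
      have hconv := exp_le_cosh_aux l b (D n ω) hb hω
      have hexp : 0 < Real.exp (l * Y n ω) := Real.exp_pos _
      calc Real.exp (l * Y n ω) * Real.exp (l * D n ω)
          ≤ Real.exp (l * Y n ω) *
            (Real.cosh (l * b) + (D n ω / b) * Real.sinh (l * b)) := by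
            exact mul_le_mul_of_nonneg_left hconv hexp.le
        _ = Real.cosh (l * b) * Real.exp (l * Y n ω) +
            (Real.sinh (l * b) / b) * (Real.exp (l * Y n ω) * D n ω) := by
            field_simp
    have hsplit : ∫ ω, (Real.cosh (l * b) * Real.exp (l * Y n ω) +
          (Real.sinh (l * b) / b) * (Real.exp (l * Y n ω) * D n ω)) ∂μ =
        Real.cosh (l * b) * (∫ ω, Real.exp (l * Y n ω) ∂μ) +
          (Real.sinh (l * b) / b) * ∫ ω, Real.exp (l * Y n ω) * D n ω ∂μ := by
      rw [integral_add ((hEint n).const_mul _) ((hEDint n).const_mul _),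
        MeasureTheory.integral_const_mul, MeasureTheory.integral_const_mul]
    have hnonpos : (Real.sinh (l * b) / b) * (∫ ω, Real.exp (l * Y n ω) * D n ω ∂μ) ≤ 0 :=
      mul_nonpos_of_nonneg_of_nonpos (by positivity) (hkey n)
    calc ∫ ω, Real.exp (l * Y (n+1) ω) ∂μ ≤ _ := hmono
      _ = _ := hsplit
      _ ≤ Real.cosh (l * b) * ∫ ω, Real.exp (l * Y n ω) ∂μ := by linarith
  -- moment bound
  have hA : ∀ n, ∫ ω, Real.exp (l * Y n ω) ∂μ ≤
      Real.exp (l * m₀) * Real.cosh (l * b) ^ n := by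
    intro n
    induction n with
    | zero =>
      have : (fun ω => Real.exp (l * Y 0 ω)) = fun _ => Real.exp (l * m₀) := by
        ext ω; rw [hY0 ω]
      rw [this]
      simp
    | succ n ih =>
      calc ∫ ω, Real.exp (l * Y (n+1) ω) ∂μ
          ≤ Real.cosh (l * b) * ∫ ω, Real.exp (l * Y n ω) ∂μ := hrec n
        _ ≤ Real.cosh (l * b) * (Real.exp (l * m₀) * Real.cosh (l * b) ^ n) :=
            mul_le_mul_of_nonneg_left ih hcosh.le
        _ = Real.exp (l * m₀) * Real.cosh (l * b) ^ (n+1) := by ring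
  -- final step
  intro n
  have hsubset : {ω | T ω = (n : ℕ∞)} ⊆
      {ω | Real.exp (l * (ε * n)) ≤ Real.exp (l * Y n ω)} := by
    intro ω hω
    have hTn : T ω = (n : ℕ∞) := hω
    have hYn : Y n ω = X n ω + ε * n := by
      have h1 : min (n : ℕ∞) (T ω) = (n : ℕ∞) := by rw [hTn, min_self]
      simp [hYdef, h1]
    have hXn : 0 ≤ X n ω := hrep ω n hTn
    have : ε * n ≤ Y n ω := by rw [hYn]; linarith
    exact Real.exp_le_exp.mpr (mul_le_mul_of_nonneg_left this hl.le)
  have hmarkov := mul_meas_ge_le_integral_of_nonneg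
    (f := fun ω => Real.exp (l * Y n ω))
    (Filter.Eventually.of_forall fun ω => (Real.exp_pos _).le) (hEint n)
    (Real.exp (l * (ε * n)))
  set S := {ω | Real.exp (l * (ε * n)) ≤ Real.exp (l * Y n ω)} with hSdef
  have hμS : (μ S).toReal ≤
      Real.exp (l * m₀) * Real.cosh (l * b) ^ n * Real.exp (-(l * (ε * n))) := by
    have hA' := (hmarkov.trans (hA n))
    have hpos : 0 < Real.exp (l * (ε * n)) := Real.exp_pos _
    rw [Real.exp_neg]
    rw [← le_div_iff₀' hpos] at hA'
    calc (μ S).toReal ≤ Real.exp (l * m₀) * Real.cosh (l * b) ^ n / Real.exp (l * (ε * n)) := hA'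
      _ = Real.exp (l * m₀) * Real.cosh (l * b) ^ n * (Real.exp (l * (ε * n)))⁻¹ := by
          rw [div_eq_mul_inv]
  have htarget : Real.exp (l * m₀) * Real.cosh (l * b) ^ n * Real.exp (-(l * (ε * n))) ≤
      Real.exp (ε * m₀ / (c + ε) ^ 2) * Real.exp (-(ε ^ 2) / (2 * (c + ε) ^ 2)) ^ n := by
    have hlm : l * m₀ = ε * m₀ / (c + ε) ^ 2 := by rw [hldef, hbdef]; ring
    have hfac : Real.cosh (l * b) * Real.exp (-(l * ε)) ≤
        Real.exp (-(ε ^ 2) / (2 * (c + ε) ^ 2)) := by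
      have h1 : Real.cosh (l * b) ≤ Real.exp ((l * b) ^ 2 / 2) :=
        Real.cosh_le_exp_half_sq _
      calc Real.cosh (l * b) * Real.exp (-(l * ε))
          ≤ Real.exp ((l * b) ^ 2 / 2) * Real.exp (-(l * ε)) :=
            mul_le_mul_of_nonneg_right h1 (Real.exp_pos _).le
        _ = Real.exp ((l * b) ^ 2 / 2 - l * ε) := by rw [← Real.exp_add]; ring_nf
        _ = Real.exp (-(ε ^ 2) / (2 * (c + ε) ^ 2)) := by
            congr 1
            rw [hldef, hbdef]
            field_simp
            ring
    have hexpn : Real.exp (-(l * (ε * n))) = Real.exp (-(l * ε)) ^ n := by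
      rw [← Real.exp_nat_mul]; congr 1; ring
    calc Real.exp (l * m₀) * Real.cosh (l * b) ^ n * Real.exp (-(l * (ε * n)))
        = Real.exp (l * m₀) * (Real.cosh (l * b) * Real.exp (-(l * ε))) ^ n := by
          rw [hexpn, mul_pow]; ring
      _ ≤ Real.exp (l * m₀) * Real.exp (-(ε ^ 2) / (2 * (c + ε) ^ 2)) ^ n := by
          apply mul_le_mul_of_nonneg_left _ (Real.exp_pos _).le
          exact pow_le_pow_left₀ (by positivity) hfac n
      _ = _ := by rw [hlm]
  calc μ {ω | T ω = (n : ℕ∞)} ≤ μ S := measure_mono hsubset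
    _ = ENNReal.ofReal ((μ S).toReal) := (ENNReal.ofReal_toReal (measure_ne_top μ S)).symm
    _ ≤ ENNReal.ofReal (Real.exp (ε * m₀ / (c + ε) ^ 2) *
          Real.exp (-(ε ^ 2) / (2 * (c + ε) ^ 2)) ^ n) :=
        ENNReal.ofReal_le_ofReal (hμS.trans htarget)
end

section
/- Let $\{X_i\}_{i=0}^\infty$ be an $\epsilon$-repulsing supermartingale for a stopping time $T$ with $c$-bounded differences, $\epsilon>0$, $c>0$, and deterministic initial value $X_0 = m_0 < 0$. Then $\mathbb{P}(T < \infty) \leq \alpha \cdot \frac{\gamma^{\lceil |m_0|/c \rceil}}{1-\gamma}$, where $\gamma = e^{-\epsilon^2/(2(c+\epsilon)^2)}$ and $\alpha = e^{\epsilon m_0/(c+\epsilon)^2}$. -/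
open MeasureTheory

lemma exp_le_linear_aux {y b : ℝ} (hb : 0 < b) (hy : |y| ≤ b) :
    Real.exp y ≤ Real.cosh b + (y / b) * Real.sinh b := by
  obtain ⟨h1, h2⟩ := abs_le.mp hy
  have key := convexOn_exp.2 (Set.mem_univ (-b)) (Set.mem_univ b)
    (show (0:ℝ) ≤ (b - y) / (2 * b) from div_nonneg (by linarith) (by linarith))
    (show (0:ℝ) ≤ (b + y) / (2 * b) from div_nonneg (by linarith) (by linarith))
    (by field_simp; ring)
  have hxy : ((b - y) / (2 * b)) • (-b) + ((b + y) / (2 * b)) • b = y := by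
    rw [smul_eq_mul, smul_eq_mul]; field_simp; ring
  rw [hxy] at key
  have : ((b - y) / (2 * b)) • Real.exp (-b) + ((b + y) / (2 * b)) • Real.exp b
      = Real.cosh b + (y / b) * Real.sinh b := by
    rw [Real.cosh_eq, Real.sinh_eq, smul_eq_mul, smul_eq_mul]
    field_simp; ring
  linarith [key.trans_eq this]

lemma cosh_le_exp_sq_aux {x : ℝ} (hx : |x| ≤ 1) : Real.cosh x ≤ Real.exp (x ^ 2 / 2) := by
  have h4 := Real.exp_bound hx (by norm_num : 0 < 4)
  have hx' : |(-x)| ≤ 1 := by rwa [abs_neg]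
  have h4' := Real.exp_bound hx' (by norm_num : 0 < 4)
  have hsum : ∑ i ∈ Finset.range 4, x ^ i / (Nat.factorial i) = 1 + x + x ^ 2 / 2 + x ^ 3 / 6 := by
    simp [Finset.sum_range_succ, Nat.factorial]; try ring
  have hsum' : ∑ i ∈ Finset.range 4, (-x) ^ i / (Nat.factorial i)
      = 1 - x + x ^ 2 / 2 - x ^ 3 / 6 := by
    simp [Finset.sum_range_succ, Nat.factorial]; try ring
  rw [hsum] at h4
  rw [hsum', abs_neg] at h4'
  have hx4 : |x| ^ 4 = x ^ 4 := by
    rw [← abs_pow]; exact abs_of_nonneg (by positivity)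
  rw [hx4] at h4 h4'
  norm_num [Nat.factorial] at h4 h4'
  have e1 : Real.exp x ≤ 1 + x + x ^ 2 / 2 + x ^ 3 / 6 + x ^ 4 * (5 / 96) := by
    have := abs_le.mp h4; linarith [this.2]
  have e2 : Real.exp (-x) ≤ 1 - x + x ^ 2 / 2 - x ^ 3 / 6 + x ^ 4 * (5 / 96) := by
    have := abs_le.mp h4'; linarith [this.2]
  have lo : (1 + x ^ 2 / 4) * (1 + x ^ 2 / 4) ≤ Real.exp (x ^ 2 / 2) := by
    have h := Real.add_one_le_exp (x ^ 2 / 4)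
    have hmul : Real.exp (x ^ 2 / 4) * Real.exp (x ^ 2 / 4) = Real.exp (x ^ 2 / 2) := by
      rw [← Real.exp_add]; ring_nf
    nlinarith [Real.exp_pos (x ^ 2 / 4), sq_nonneg x]
  rw [Real.cosh_eq]
  nlinarith [sq_nonneg x, sq_nonneg (x ^ 2)]

/-- Tail bound on the probability that an `ε`-repulsing supermartingale ever stops
(Theorem 6 of the paper). -/
theorem repulsing_supermartingale_reach_bound
    {Ω : Type*} {m : MeasurableSpace Ω} {μ : Measure Ω} [IsProbabilityMeasure μ]
    (ℱ : Filtration ℕ m) (X : ℕ → Ω → ℝ) (T : Ω → ℕ∞) (ε c m₀ : ℝ)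
    (hε : 0 < ε) (hc : 0 < c) (hm₀ : m₀ < 0)
    (hstop : ∀ n : ℕ, MeasurableSet[ℱ n] {ω | T ω ≤ n})
    (hsup : Supermartingale X ℱ μ)
    (hdec : ∀ i : ℕ,
      μ[X (i + 1)|ℱ i] ≤ᵐ[μ]
        fun ω => X i ω - Set.indicator {ω | (i : ℕ∞) < T ω} (fun _ => ε) ω)
    (hrep : ∀ ω (j : ℕ), T ω = j → 0 ≤ X j ω)
    (hbdd : ∀ i, ∀ᵐ ω ∂μ, |X (i + 1) ω - X i ω| < c)
    (hinit : ∀ ω, X 0 ω = m₀) :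
    μ {ω | T ω < ⊤} ≤
      ENNReal.ofReal (Real.exp (ε * m₀ / (c + ε) ^ 2) *
        Real.exp (-(ε ^ 2) / (2 * (c + ε) ^ 2)) ^ (⌈|m₀| / c⌉₊) /
        (1 - Real.exp (-(ε ^ 2) / (2 * (c + ε) ^ 2)))) := by
  classical
  set b : ℝ := c + ε with hb_def
  have hb : 0 < b := by positivity
  set l : ℝ := ε / b ^ 2 with hl_def
  have hl : 0 < l := by positivity
  set g : ℝ := Real.exp (-(ε ^ 2) / (2 * b ^ 2)) with hg_def
  have hg0 : 0 < g := Real.exp_pos _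
  have hg1 : g < 1 := by
    rw [hg_def]
    apply Real.exp_lt_one_iff.mpr
    have : 0 < ε ^ 2 / (2 * b ^ 2) := by positivity
    rw [neg_div]; linarith
  -- measurability facts
  have hXm : ∀ n, StronglyMeasurable (X n) := fun n => (hsup.stronglyAdapted n).mono (ℱ.le n)
  have hexpm : ∀ n, AEStronglyMeasurable (fun ω => Real.exp (l * X n ω)) μ := fun n =>
    (Real.continuous_exp.comp_stronglyMeasurable ((hXm n).const_mul l)).aestronglyMeasurable
  have hTle : ∀ n : ℕ, MeasurableSet {ω | T ω ≤ (n : ℕ∞)} := fun n => ℱ.le n _ (hstop n)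
  have hTltF : ∀ n : ℕ, MeasurableSet[ℱ n] {ω | (n : ℕ∞) < T ω} := by
    intro n
    have : {ω | (n : ℕ∞) < T ω} = {ω | T ω ≤ (n : ℕ∞)}ᶜ := by
      ext ω; simp [not_le]
    rw [this]; exact (hstop n).compl
  have hTeq : ∀ n : ℕ, MeasurableSet {ω | T ω = (n : ℕ∞)} := by
    intro n
    cases n with
    | zero =>
      have : {ω | T ω = ((0 : ℕ) : ℕ∞)} = {ω | T ω ≤ ((0 : ℕ) : ℕ∞)} := by
        ext ω; simp [le_zero_iff]
      rw [this]; exact hTle 0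
    | succ n =>
      have : {ω | T ω = ((n + 1 : ℕ) : ℕ∞)}
          = {ω | T ω ≤ ((n + 1 : ℕ) : ℕ∞)} ∩ {ω | T ω ≤ (n : ℕ∞)}ᶜ := by
        ext ω
        simp only [Set.mem_setOf_eq, Set.mem_inter_iff, Set.mem_compl_iff, not_le]
        constructor
        · intro h
          rw [h]
          refine ⟨le_refl _, ?_⟩
          exact_mod_cast Nat.lt_succ_self n
        · rintro ⟨h1, h2⟩
          have h3 : (n : ℕ∞) + 1 ≤ T ω := (ENat.add_one_le_iff (by simp)).mpr h2
          have h4 : ((n + 1 : ℕ) : ℕ∞) ≤ T ω := by push_cast; exact h3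
          exact le_antisymm h1 h4
      rw [this]; exact (hTle _).inter (hTle n).compl
  have hTge : ∀ n : ℕ, MeasurableSet {ω | (n : ℕ∞) ≤ T ω} := by
    intro n
    cases n with
    | zero =>
      have : {ω | ((0 : ℕ) : ℕ∞) ≤ T ω} = Set.univ := by
        ext ω; simp
      rw [this]; exact MeasurableSet.univ
    | succ n =>
      have : {ω | ((n + 1 : ℕ) : ℕ∞) ≤ T ω} = {ω | T ω ≤ (n : ℕ∞)}ᶜ := by
        ext ω
        simp only [Set.mem_setOf_eq, Set.mem_compl_iff, not_le]
        rw [show ((n + 1 : ℕ) : ℕ∞) = (n : ℕ∞) + 1 by push_cast; rfl]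
        exact ENat.add_one_le_iff (by simp)
      rw [this]; exact (hTle n).compl
  -- a.e. bounds on X
  have habs : ∀ n, ∀ᵐ ω ∂μ, |X n ω| ≤ |m₀| + n * c := by
    intro n
    induction n with
    | zero =>
      filter_upwards with ω
      rw [hinit ω]; simp
    | succ n ih =>
      filter_upwards [ih, hbdd n] with ω h1 h2
      have h3 : |X (n + 1) ω| ≤ |X n ω| + |X (n + 1) ω - X n ω| := by
        have := abs_add_le (X n ω) (X (n + 1) ω - X n ω)
        simpa using this
      push_cast
      nlinarith
  have hub : ∀ n, ∀ᵐ ω ∂μ, X n ω ≤ m₀ + n * c := by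
    intro n
    induction n with
    | zero =>
      filter_upwards with ω
      rw [hinit ω]; simp
    | succ n ih =>
      filter_upwards [ih, hbdd n] with ω h1 h2
      have h3 : X (n + 1) ω - X n ω ≤ |X (n + 1) ω - X n ω| := le_abs_self _
      push_cast
      nlinarith
  have hexp_int : ∀ n, Integrable (fun ω => Real.exp (l * X n ω)) μ := by
    intro n
    refine Integrable.mono' (integrable_const (Real.exp (l * (|m₀| + n * c)))) (hexpm n) ?_
    filter_upwards [habs n] with ω h
    rw [Real.norm_eq_abs, Real.abs_exp]
    exact Real.exp_le_exp.mpr (mul_le_mul_of_nonneg_left ((le_abs_self _).trans h) hl.le)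
  -- the exponential supermartingale-type process
  set Z : ℕ → Ω → ℝ := fun n ω =>
    (∑ j ∈ Finset.range n,
      Set.indicator {ω' | T ω' = (j : ℕ∞)} (fun ω'' => Real.exp (l * X j ω'') * g ^ (n - j)) ω)
    + Set.indicator {ω' | (n : ℕ∞) ≤ T ω'} (fun ω'' => Real.exp (l * X n ω'')) ω with hZdef
  have hZeq : ∀ n j : ℕ, j ≤ n → ∀ ω, T ω = (j : ℕ∞) →
      Z n ω = Real.exp (l * X j ω) * g ^ (n - j) := by
    intro n j hjn ω hj
    rcases lt_or_eq_of_le hjn with h | h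
    · rw [hZdef]
      simp only
      rw [Finset.sum_eq_single j]
      · rw [Set.indicator_of_mem (show ω ∈ {ω' | T ω' = (j : ℕ∞)} from hj),
          Set.indicator_of_notMem, add_zero]
        simp only [Set.mem_setOf_eq]
        rw [hj]
        exact not_le.mpr (by exact_mod_cast h)
      · intro i hi hij
        apply Set.indicator_of_notMem
        simp only [Set.mem_setOf_eq]
        rw [hj]
        exact fun hc' => hij (by exact_mod_cast hc'.symm)
      · intro hmem
        exact absurd (Finset.mem_range.mpr h) hmem
    · subst h
      rw [hZdef]
      simp only
      rw [Finset.sum_eq_zero, Set.indicator_of_mem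
        (show ω ∈ {ω' | (j : ℕ∞) ≤ T ω'} by simp only [Set.mem_setOf_eq]; rw [hj]),
        zero_add, Nat.sub_self, pow_zero, mul_one]
      · intro i hi
        apply Set.indicator_of_notMem
        simp only [Set.mem_setOf_eq]
        rw [hj]
        intro hc'
        have h1 : j = i := by exact_mod_cast hc'
        have h2 : i < j := Finset.mem_range.mp hi
        omega
  have hZgt : ∀ (n : ℕ) (ω : Ω), (n : ℕ∞) ≤ T ω → Z n ω = Real.exp (l * X n ω) := by
    intro n ω h
    rw [hZdef]
    simp only
    rw [Finset.sum_eq_zero, Set.indicator_of_mem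
      (show ω ∈ {ω' | (n : ℕ∞) ≤ T ω'} from h), zero_add]
    intro i hi
    apply Set.indicator_of_notMem
    simp only [Set.mem_setOf_eq]
    intro hc'
    rw [hc'] at h
    have h1 : n ≤ i := by exact_mod_cast h
    have h2 : i < n := Finset.mem_range.mp hi
    omega
  have hZrec1 : ∀ (n : ℕ) (ω : Ω), T ω ≤ (n : ℕ∞) → Z (n + 1) ω = g * Z n ω := by
    intro n ω h
    have hne : T ω ≠ ⊤ := by
      intro hT; rw [hT] at h; exact absurd h (by simp)
    obtain ⟨j, hj⟩ := WithTop.ne_top_iff_exists.mp hne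
    have hjn : j ≤ n := by
      rw [← hj] at h; exact Nat.cast_le.mp h
    rw [hZeq (n + 1) j (by omega) ω hj.symm, hZeq n j hjn ω hj.symm]
    rw [show n + 1 - j = (n - j) + 1 by omega, pow_succ]
    ring
  have hZrec2 : ∀ (n : ℕ) (ω : Ω), (n : ℕ∞) < T ω → Z (n + 1) ω = Real.exp (l * X (n + 1) ω) := by
    intro n ω h
    apply hZgt
    have h1 : (n : ℕ∞) + 1 ≤ T ω := (ENat.add_one_le_iff (by simp)).mpr h
    push_cast
    exact h1
  have hZnn : ∀ n ω, 0 ≤ Z n ω := by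
    intro n ω
    apply add_nonneg
    · apply Finset.sum_nonneg
      intro i _
      apply Set.indicator_nonneg
      intro x _
      positivity
    · apply Set.indicator_nonneg
      intro x _
      positivity
  have hZint : ∀ n, Integrable (Z n) μ := by
    intro n
    apply Integrable.add
    · apply integrable_finset_sum
      intro i hi
      exact ((hexp_int i).mul_const _).indicator (hTeq i)
    · exact (hexp_int n).indicator (hTge n)
  have hZ0 : ∫ ω, Z 0 ω ∂μ = Real.exp (l * m₀) := by
    have h0 : ∀ ω, Z 0 ω = Real.exp (l * m₀) := by
      intro ω
      rw [hZgt 0 ω (by simp), hinit ω]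
    calc ∫ ω, Z 0 ω ∂μ = ∫ _ω, Real.exp (l * m₀) ∂μ :=
          integral_congr_ae (Filter.Eventually.of_forall h0)
      _ = Real.exp (l * m₀) := by simp
  -- the key one-step conditional bound
  have hcore : ∀ (n : ℕ), ∫ ω in {ω | (n : ℕ∞) < T ω}, Real.exp (l * X (n + 1) ω) ∂μ
      ≤ g * ∫ ω in {ω | (n : ℕ∞) < T ω}, Real.exp (l * X n ω) ∂μ := by
    intro n
    set S := {ω | (n : ℕ∞) < T ω} with hSdef
    have hSF : MeasurableSet[ℱ n] S := hTltF n
    have hSm : MeasurableSet S := ℱ.le n _ hSF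
    set D : Ω → ℝ := fun ω => X (n + 1) ω - X n ω with hDdef
    have hD_int : Integrable D μ := (hsup.integrable (n + 1)).sub (hsup.integrable n)
    set E : Ω → ℝ := fun ω => Real.exp (l * D ω) with hEdef
    have hEm : AEStronglyMeasurable E μ := (Real.continuous_exp.comp_stronglyMeasurable
      (((hXm (n + 1)).sub (hXm n)).const_mul l)).aestronglyMeasurable
    have hE_int : Integrable E μ := by
      refine Integrable.mono' (integrable_const (Real.exp (l * c))) hEm ?_
      filter_upwards [hbdd n] with ω h
      rw [Real.norm_eq_abs, Real.abs_exp]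
      exact Real.exp_le_exp.mpr (mul_le_mul_of_nonneg_left ((le_abs_self _).trans h.le) hl.le)
    set A : ℝ := Real.exp (-(l * ε)) * (Real.cosh (l * b) + (ε / b) * Real.sinh (l * b)) with hAdef
    set B : ℝ := Real.exp (-(l * ε)) * (Real.sinh (l * b) / b) with hBdef
    have hBnn : 0 ≤ B := mul_nonneg (Real.exp_pos _).le
      (div_nonneg (Real.sinh_nonneg_iff.mpr (by positivity)) hb.le)
    have hlb : l * b = ε / b := by
      rw [hl_def]; field_simp
    have hgb : Real.exp (-(l * ε)) * Real.exp ((l * b) ^ 2 / 2) = g := by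
      rw [← Real.exp_add, hg_def]
      congr 1
      rw [hlb, hl_def]
      field_simp
      ring
    have hABg : A - B * ε ≤ g := by
      have hAB : A - B * ε = Real.exp (-(l * ε)) * Real.cosh (l * b) := by
        rw [hAdef, hBdef]; field_simp; ring
      rw [hAB, ← hgb]
      apply mul_le_mul_of_nonneg_left _ (Real.exp_pos _).le
      apply cosh_le_exp_sq_aux
      rw [abs_of_nonneg (by positivity), hlb, div_le_one hb]
      rw [hb_def]; linarith
    have h_pt : ∀ᵐ ω ∂μ, E ω ≤ A + B * D ω := by
      filter_upwards [hbdd n] with ω h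
      have h1 : |l * (D ω + ε)| ≤ l * b := by
        rw [abs_mul, abs_of_nonneg hl.le]
        apply mul_le_mul_of_nonneg_left _ hl.le
        calc |D ω + ε| ≤ |D ω| + |ε| := abs_add_le _ _
          _ ≤ b := by rw [abs_of_nonneg hε.le, hb_def]; exact add_le_add h.le le_rfl
      have h2 := exp_le_linear_aux (by positivity : (0 : ℝ) < l * b) h1
      have h3 : E ω = Real.exp (-(l * ε)) * Real.exp (l * (D ω + ε)) := by
        rw [hEdef]
        simp only
        rw [← Real.exp_add]
        congr 1
        ring
      rw [h3]
      calc Real.exp (-(l * ε)) * Real.exp (l * (D ω + ε))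
          ≤ Real.exp (-(l * ε)) *
            (Real.cosh (l * b) + (l * (D ω + ε)) / (l * b) * Real.sinh (l * b)) :=
            mul_le_mul_of_nonneg_left h2 (Real.exp_pos _).le
        _ = A + B * D ω := by
            rw [hAdef, hBdef, mul_div_mul_left _ _ (ne_of_gt hl)]
            field_simp
            ring
    have hABD_int : Integrable (fun ω => A + B * D ω) μ :=
      (integrable_const A).add (hD_int.const_mul B)
    have h_pull : μ[fun ω => Real.exp (l * X (n + 1) ω)|ℱ n] =ᵐ[μ]
        fun ω => Real.exp (l * X n ω) * (μ[E|ℱ n]) ω := by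
      have hfact : (fun ω => Real.exp (l * X (n + 1) ω))
          = (fun ω => Real.exp (l * X n ω)) * E := by
        funext ω
        simp only [Pi.mul_apply, hEdef, ← Real.exp_add]
        congr 1
        rw [hDdef]
        ring
      rw [hfact]
      exact condExp_mul_of_stronglyMeasurable_left
        (Real.continuous_exp.comp_stronglyMeasurable ((hsup.stronglyAdapted n).const_mul l))
        (hfact ▸ hexp_int (n + 1)) hE_int
    have h_mono1 : μ[E|ℱ n] ≤ᵐ[μ] μ[fun ω => A + B * D ω|ℱ n] :=
      condExp_mono hE_int hABD_int h_pt
    have h_lin : μ[fun ω => A + B * D ω|ℱ n] =ᵐ[μ] fun ω => A + B * (μ[D|ℱ n]) ω := by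
      have h1 : (fun ω => A + B * D ω) = (fun _ => A) + B • D := by
        funext ω
        simp [Pi.add_apply, Pi.smul_apply, smul_eq_mul]
      rw [h1]
      refine (condExp_add (integrable_const A) (hD_int.smul B) (ℱ n)).trans ?_
      have h2 := condExp_smul (μ := μ) (m := ℱ n) B D
      filter_upwards [h2] with ω hω
      rw [Pi.add_apply, condExp_const (ℱ.le n), hω, Pi.smul_apply, smul_eq_mul]
    have h_D : μ[D|ℱ n] =ᵐ[μ] fun ω => (μ[X (n + 1)|ℱ n]) ω - X n ω := by
      refine (condExp_sub (hsup.integrable (n + 1)) (hsup.integrable n) (ℱ n)).trans ?_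
      rw [condExp_of_stronglyMeasurable (ℱ.le n) (hsup.stronglyAdapted n) (hsup.integrable n)]
      exact Filter.Eventually.of_forall fun ω => rfl
    have hrestrict : ∀ᵐ ω ∂(μ.restrict S),
        (μ[fun ω' => Real.exp (l * X (n + 1) ω')|ℱ n]) ω ≤ g * Real.exp (l * X n ω) := by
      rw [ae_restrict_iff' hSm]
      filter_upwards [h_pull, h_mono1, h_lin, h_D, hdec n] with ω h1 h2 h3 h4 h5 hmem
      have hd : (μ[D|ℱ n]) ω ≤ -ε := by
        rw [h4]
        rw [Set.indicator_of_mem hmem] at h5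
        linarith
      have hEc : (μ[E|ℱ n]) ω ≤ g := by
        have hs1 : (μ[E|ℱ n]) ω ≤ A + B * (μ[D|ℱ n]) ω := h2.trans_eq h3
        have hs2 : B * (μ[D|ℱ n]) ω ≤ B * (-ε) := mul_le_mul_of_nonneg_left hd hBnn
        have : A + B * (-ε) = A - B * ε := by ring
        linarith [hABg]
      rw [h1]
      calc Real.exp (l * X n ω) * (μ[E|ℱ n]) ω
          ≤ Real.exp (l * X n ω) * g :=
            mul_le_mul_of_nonneg_left hEc (Real.exp_pos _).le
        _ = g * Real.exp (l * X n ω) := mul_comm _ _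
    calc ∫ ω in S, Real.exp (l * X (n + 1) ω) ∂μ
        = ∫ ω in S, (μ[fun ω' => Real.exp (l * X (n + 1) ω')|ℱ n]) ω ∂μ :=
          (setIntegral_condExp (ℱ.le n) (hexp_int (n + 1)) hSF).symm
      _ ≤ ∫ ω in S, g * Real.exp (l * X n ω) ∂μ :=
          setIntegral_mono_ae_restrict integrable_condExp.integrableOn
            (((hexp_int n).const_mul g).integrableOn) hrestrict
      _ = g * ∫ ω in S, Real.exp (l * X n ω) ∂μ := integral_const_mul _ _
  -- one-step decrease of the expectation of Z
  have hrec : ∀ n, ∫ ω, Z (n + 1) ω ∂μ ≤ g * ∫ ω, Z n ω ∂μ := by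
    intro n
    set Aset := {ω | T ω ≤ (n : ℕ∞)} with hAsdef
    have hAm : MeasurableSet Aset := hTle n
    have hcompl : Asetᶜ = {ω | (n : ℕ∞) < T ω} := by
      ext ω; simp [hAsdef, not_le]
    have split1 : ∫ ω, Z (n + 1) ω ∂μ
        = ∫ ω in Aset, Z (n + 1) ω ∂μ + ∫ ω in Asetᶜ, Z (n + 1) ω ∂μ :=
      (integral_add_compl hAm (hZint (n + 1))).symm
    have split2 : ∫ ω, Z n ω ∂μ = ∫ ω in Aset, Z n ω ∂μ + ∫ ω in Asetᶜ, Z n ω ∂μ :=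
      (integral_add_compl hAm (hZint n)).symm
    have e1 : ∫ ω in Aset, Z (n + 1) ω ∂μ = g * ∫ ω in Aset, Z n ω ∂μ := by
      rw [← integral_const_mul]
      exact setIntegral_congr_fun hAm fun ω hω => hZrec1 n ω hω
    have e2 : ∫ ω in Asetᶜ, Z (n + 1) ω ∂μ ≤ g * ∫ ω in Asetᶜ, Z n ω ∂μ := by
      have hlt : ∀ ω ∈ Asetᶜ, (n : ℕ∞) < T ω := by
        intro ω hω
        rw [hcompl] at hω
        exact hω
      have c1 : ∫ ω in Asetᶜ, Z (n + 1) ω ∂μ = ∫ ω in Asetᶜ, Real.exp (l * X (n + 1) ω) ∂μ :=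
        setIntegral_congr_fun hAm.compl fun ω hω => hZrec2 n ω (hlt ω hω)
      have c2 : ∫ ω in Asetᶜ, Z n ω ∂μ = ∫ ω in Asetᶜ, Real.exp (l * X n ω) ∂μ :=
        setIntegral_congr_fun hAm.compl fun ω hω => hZgt n ω (hlt ω hω).le
      rw [c1, c2, hcompl]
      exact hcore n
    rw [split1, split2, mul_add]
    linarith
  have hZleq : ∀ n, ∫ ω, Z n ω ∂μ ≤ Real.exp (l * m₀) * g ^ n := by
    intro n
    induction n with
    | zero => rw [hZ0]; simp
    | succ n ih =>
      calc ∫ ω, Z (n + 1) ω ∂μ ≤ g * ∫ ω, Z n ω ∂μ := hrec n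
        _ ≤ g * (Real.exp (l * m₀) * g ^ n) := mul_le_mul_of_nonneg_left ih hg0.le
        _ = Real.exp (l * m₀) * g ^ (n + 1) := by ring
  -- Markov-type bound on each {T = n}
  have hμn : ∀ n : ℕ, μ {ω | T ω = (n : ℕ∞)} ≤ ENNReal.ofReal (Real.exp (l * m₀) * g ^ n) := by
    intro n
    have h1 : (μ {ω | T ω = (n : ℕ∞)}).toReal ≤ ∫ ω, Z n ω ∂μ := by
      have ha : ∫ _ω in {ω | T ω = (n : ℕ∞)}, (1 : ℝ) ∂μ
          = (μ {ω | T ω = (n : ℕ∞)}).toReal := by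
        rw [setIntegral_const]; simp [Measure.real]
      rw [← ha]
      calc ∫ _ω in {ω | T ω = (n : ℕ∞)}, (1 : ℝ) ∂μ
          ≤ ∫ ω in {ω | T ω = (n : ℕ∞)}, Z n ω ∂μ := by
            apply setIntegral_mono_on (integrableOn_const (measure_ne_top μ _))
              ((hZint n).integrableOn) (hTeq n)
            intro ω hω
            rw [hZeq n n le_rfl ω hω, Nat.sub_self, pow_zero, mul_one]
            exact Real.one_le_exp (mul_nonneg hl.le (hrep ω n hω))
        _ ≤ ∫ ω, Z n ω ∂μ :=
            setIntegral_le_integral (hZint n) (Filter.Eventually.of_forall (hZnn n))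
    calc μ {ω | T ω = (n : ℕ∞)}
        = ENNReal.ofReal ((μ {ω | T ω = (n : ℕ∞)}).toReal) :=
          (ENNReal.ofReal_toReal (measure_ne_top μ _)).symm
      _ ≤ ENNReal.ofReal (Real.exp (l * m₀) * g ^ n) :=
          ENNReal.ofReal_le_ofReal (h1.trans (hZleq n))
  -- the stopping time cannot stop before n₀
  set n₀ := ⌈|m₀| / c⌉₊ with hn0def
  have hnull : ∀ n : ℕ, n < n₀ → μ {ω | T ω = (n : ℕ∞)} = 0 := by
    intro n hn
    have hX : ∀ᵐ ω ∂μ, X n ω < 0 := by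
      filter_upwards [hub n] with ω h
      have h1 : (n : ℝ) < |m₀| / c := Nat.lt_ceil.mp hn
      have h2 : (n : ℝ) * c < |m₀| := (lt_div_iff₀ hc).mp h1
      rw [abs_of_neg hm₀] at h2
      linarith
    have h0 : μ {ω | 0 ≤ X n ω} = 0 := by
      have := ae_iff.mp hX
      simpa [not_lt] using this
    exact measure_mono_null (fun ω hω => hrep ω n hω) h0
  -- assembling the final bound
  have hcover : {ω | T ω < ⊤} ⊆
      (⋃ k : ℕ, {ω | T ω = ((n₀ + k : ℕ) : ℕ∞)})
      ∪ (⋃ j ∈ Finset.range n₀, {ω | T ω = (j : ℕ∞)}) := by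
    intro ω hω
    have hne : T ω ≠ ⊤ := hω.ne
    obtain ⟨t, ht⟩ := WithTop.ne_top_iff_exists.mp hne
    by_cases hcase : n₀ ≤ t
    · left
      refine Set.mem_iUnion.mpr ⟨t - n₀, ?_⟩
      simp only [Set.mem_setOf_eq]
      rw [show n₀ + (t - n₀) = t by omega]
      exact ht.symm
    · right
      refine Set.mem_biUnion (x := t) (Finset.mem_range.mpr (by omega)) ?_
      simp only [Set.mem_setOf_eq]
      exact ht.symm
  have hnullU : μ (⋃ j ∈ Finset.range n₀, {ω | T ω = (j : ℕ∞)}) = 0 :=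
    (measure_biUnion_null_iff (Finset.range n₀).countable_toSet).mpr
      fun j hj => hnull j (Finset.mem_range.mp hj)
  have hgoal : ENNReal.ofReal (Real.exp (ε * m₀ / b ^ 2) * g ^ n₀ / (1 - g))
      = ENNReal.ofReal (Real.exp (l * m₀) * g ^ n₀) * (1 - ENNReal.ofReal g)⁻¹ := by
    rw [show ε * m₀ / b ^ 2 = l * m₀ by rw [hl_def]; ring]
    rw [ENNReal.ofReal_div_of_pos (by linarith), div_eq_mul_inv]
    congr 1
    rw [ENNReal.ofReal_sub _ hg0.le, ENNReal.ofReal_one]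
  calc μ {ω | T ω < ⊤}
      ≤ μ ((⋃ k : ℕ, {ω | T ω = ((n₀ + k : ℕ) : ℕ∞)})
          ∪ (⋃ j ∈ Finset.range n₀, {ω | T ω = (j : ℕ∞)})) := measure_mono hcover
    _ ≤ μ (⋃ k : ℕ, {ω | T ω = ((n₀ + k : ℕ) : ℕ∞)})
        + μ (⋃ j ∈ Finset.range n₀, {ω | T ω = (j : ℕ∞)}) := measure_union_le _ _
    _ = μ (⋃ k : ℕ, {ω | T ω = ((n₀ + k : ℕ) : ℕ∞)}) := by rw [hnullU, add_zero]
    _ ≤ ∑' k : ℕ, μ {ω | T ω = ((n₀ + k : ℕ) : ℕ∞)} := measure_iUnion_le _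
    _ ≤ ∑' k : ℕ, ENNReal.ofReal (Real.exp (l * m₀) * g ^ n₀) * (ENNReal.ofReal g) ^ k := by
        apply ENNReal.tsum_le_tsum
        intro k
        refine (hμn (n₀ + k)).trans ?_
        rw [pow_add, ← mul_assoc, ENNReal.ofReal_mul (by positivity),
          ENNReal.ofReal_pow hg0.le]
    _ = ENNReal.ofReal (Real.exp (l * m₀) * g ^ n₀) * (1 - ENNReal.ofReal g)⁻¹ := by
        rw [ENNReal.tsum_mul_left, ENNReal.tsum_geometric]
    _ = ENNReal.ofReal (Real.exp (ε * m₀ / b ^ 2) * g ^ n₀ / (1 - g)) := hgoal.symm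
end

section
/- Let $\{X_i\}_{i=0}^\infty$ be an $\epsilon$-ranking supermartingale for a stopping time $T$ with $\epsilon > 0$, and suppose there exists $K < 0$ such that almost surely $X_i > K$ for all $i$. Then (1) $\mathbb{P}(T < \infty) = 1$, and (2) $\mathbb{E}[T] \leq (\mathbb{E}[X_0] - K)/\epsilon$. -/
open MeasureTheory ENNReal Filter

private lemma enat_coe_eq_tsum (n : ℕ∞) :
    (n : ℝ≥0∞) = ∑' i : ℕ, if (i : ℕ∞) < n then (1 : ℝ≥0∞) else 0 := by
  cases n with
  | top =>
    have : ∀ i : ℕ, (if (i : ℕ∞) < (⊤ : ℕ∞) then (1 : ℝ≥0∞) else 0) = 1 := fun i => by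
      simp [lt_top_iff_ne_top]
    simp only [this]
    rw [ENNReal.tsum_const_eq_top_of_ne_zero one_ne_zero]
    simp
  | coe m =>
    rw [tsum_eq_sum (s := Finset.range m) (by
      intro i hi
      have : ¬ ((i : ℕ∞) < (m : ℕ∞)) := by
        simp only [Finset.mem_range, not_lt] at hi
        exact_mod_cast not_lt.2 hi
      simp [this])]
    have : ∀ i ∈ Finset.range m, (if (i : ℕ∞) < (m : ℕ∞) then (1 : ℝ≥0∞) else 0) = 1 := by
      intro i hi
      simp only [Finset.mem_range] at hi
      have : (i : ℕ∞) < (m : ℕ∞) := by exact_mod_cast hi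
      simp [this]
    rw [Finset.sum_congr rfl this]
    simp

/-- A lower-bounded `ε`-ranking supermartingale yields almost-sure finiteness of the
stopping time and the expected-time bound `(E[X₀] - K)/ε`. -/
theorem ranking_supermartingale_bounded_below
    {Ω : Type*} {m : MeasurableSpace Ω} {μ : Measure Ω} [IsProbabilityMeasure μ]
    (ℱ : Filtration ℕ m) (X : ℕ → Ω → ℝ) (T : Ω → ℕ∞) (ε K : ℝ)
    (hε : 0 < ε) (hK : K < 0)
    (hstop : ∀ n : ℕ, MeasurableSet[ℱ n] {ω | T ω ≤ n})
    (hsup : Supermartingale X ℱ μ)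
    (hdec : ∀ i : ℕ,
      μ[X (i + 1)|ℱ i] ≤ᵐ[μ]
        fun ω => X i ω - Set.indicator {ω | (i : ℕ∞) < T ω} (fun _ => ε) ω)
    (hrank : ∀ ω (j : ℕ), (j : ℕ∞) < T ω → 0 ≤ X j ω)
    (hlb : ∀ᵐ ω ∂μ, ∀ i : ℕ, K < X i ω) :
    μ {ω | T ω < ⊤} = 1 ∧
    ∫⁻ ω, (T ω : ℝ≥0∞) ∂μ ≤ ENNReal.ofReal ((∫ ω, X 0 ω ∂μ - K) / ε) := by
  classical
  set S : ℕ → Set Ω := fun i => {ω | (i : ℕ∞) < T ω} with hS_def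
  have hSeq : ∀ i, S i = {ω | T ω ≤ (i : ℕ∞)}ᶜ := by
    intro i; ext ω; simp [hS_def, not_le]
  have hS : ∀ i, MeasurableSet (S i) := fun i => by
    rw [hSeq]; exact (ℱ.le i _ (hstop i)).compl
  set p : ℕ → ℝ := fun i => (μ (S i)).toReal with hp_def
  have hp0 : ∀ i, 0 ≤ p i := fun i => ENNReal.toReal_nonneg
  -- Step 1: one-step decrease of expectations
  have step1 : ∀ i, ∫ ω, X (i + 1) ω ∂μ ≤ ∫ ω, X i ω ∂μ - ε * p i := by
    intro i
    have hind : Integrable ((S i).indicator (fun _ => ε)) μ :=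
      (integrable_const ε).indicator (hS i)
    have hint : Integrable (fun ω => X i ω - (S i).indicator (fun _ => ε) ω) μ :=
      (hsup.integrable i).sub hind
    have h1 : ∫ ω, (μ[X (i + 1)|ℱ i]) ω ∂μ
        ≤ ∫ ω, (X i ω - (S i).indicator (fun _ => ε) ω) ∂μ :=
      integral_mono_ae integrable_condExp hint (hdec i)
    rw [integral_condExp (ℱ.le i)] at h1
    rw [integral_sub (hsup.integrable i) hind, integral_indicator_const ε (hS i)] at h1
    calc ∫ ω, X (i + 1) ω ∂μ ≤ ∫ ω, X i ω ∂μ - (μ (S i)).toReal • ε := h1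
      _ = ∫ ω, X i ω ∂μ - ε * p i := by rw [smul_eq_mul, mul_comm]
  -- Step 2: telescoped bound
  have step2 : ∀ n, ∫ ω, X n ω ∂μ ≤ ∫ ω, X 0 ω ∂μ - ε * ∑ i ∈ Finset.range n, p i := by
    intro n
    induction n with
    | zero => simp
    | succ n ih =>
      calc ∫ ω, X (n + 1) ω ∂μ ≤ ∫ ω, X n ω ∂μ - ε * p n := step1 n
        _ ≤ ∫ ω, X 0 ω ∂μ - ε * ∑ i ∈ Finset.range n, p i - ε * p n := by linarith
        _ = ∫ ω, X 0 ω ∂μ - ε * ∑ i ∈ Finset.range (n + 1), p i := by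
            rw [Finset.sum_range_succ]; ring
  -- Step 3: lower bound on expectations
  have step3 : ∀ n, K ≤ ∫ ω, X n ω ∂μ := by
    intro n
    have h : ∫ ω, (K : ℝ) ∂μ ≤ ∫ ω, X n ω ∂μ :=
      integral_mono_ae (integrable_const K) (hsup.integrable n)
        (by filter_upwards [hlb] with ω h using (h n).le)
    simpa using h
  -- partial-sum bound
  have hC0 : 0 ≤ ∫ ω, X 0 ω ∂μ - K := by have := step3 0; linarith
  set C : ℝ := (∫ ω, X 0 ω ∂μ - K) / ε with hC_def
  have hC0' : 0 ≤ C := div_nonneg hC0 hε.le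
  have sumbound : ∀ n, ∑ i ∈ Finset.range n, p i ≤ C := by
    intro n
    have h1 := step2 n
    have h2 := step3 n
    rw [hC_def, le_div_iff₀ hε]
    nlinarith
  have sumbound_en : ∀ n, ∑ i ∈ Finset.range n, μ (S i) ≤ ENNReal.ofReal C := by
    intro n
    have hne : ∀ i ∈ Finset.range n, μ (S i) ≠ ⊤ := fun i _ => measure_ne_top μ _
    have hne' : ∑ i ∈ Finset.range n, μ (S i) ≠ ⊤ := by
      rw [← lt_top_iff_ne_top]
      exact ENNReal.sum_lt_top.2 fun i hi => (hne i hi).lt_top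
    rw [ENNReal.le_ofReal_iff_toReal_le hne' hC0', ENNReal.toReal_sum hne]
    exact sumbound n
  have tsum_bound : ∑' i, μ (S i) ≤ ENNReal.ofReal C := by
    rw [ENNReal.tsum_eq_iSup_nat]
    exact iSup_le sumbound_en
  -- the lintegral identity
  have hlint : ∫⁻ ω, (T ω : ℝ≥0∞) ∂μ = ∑' i, μ (S i) := by
    have hpt : ∀ ω, (T ω : ℝ≥0∞) = ∑' i : ℕ, (S i).indicator (fun _ => (1 : ℝ≥0∞)) ω := by
      intro ω
      rw [enat_coe_eq_tsum (T ω)]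
      congr 1; funext i
      by_cases h : (i : ℕ∞) < T ω <;> simp [hS_def, Set.indicator_apply, h]
    calc ∫⁻ ω, (T ω : ℝ≥0∞) ∂μ
        = ∫⁻ ω, ∑' i : ℕ, (S i).indicator (fun _ => (1 : ℝ≥0∞)) ω ∂μ :=
          lintegral_congr hpt
      _ = ∑' i, ∫⁻ ω, (S i).indicator (fun _ => (1 : ℝ≥0∞)) ω ∂μ :=
          lintegral_tsum fun i => ((measurable_const.indicator (hS i)).aemeasurable)
      _ = ∑' i, μ (S i) := by
          refine tsum_congr fun i => ?_
          exact lintegral_indicator_one (μ := μ) (hS i)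
  -- Part 1: almost sure finiteness
  have hzero : μ {ω | T ω = ⊤} = 0 := by
    have hsub : ∀ i, μ {ω | T ω = ⊤} ≤ μ (S i) := by
      intro i
      refine measure_mono fun ω hω => ?_
      simp only [Set.mem_setOf_eq] at hω
      simp [hS_def, hω, lt_top_iff_ne_top]
    have htend : Tendsto (fun i => μ (S i)) atTop (nhds 0) :=
      ENNReal.tendsto_atTop_zero_of_tsum_ne_top
        (lt_of_le_of_lt tsum_bound ofReal_lt_top).ne
    have := ge_of_tendsto' htend hsub
    exact le_antisymm this zero_le
  constructor
  · have heq : {ω | T ω < ⊤} = {ω | T ω = ⊤}ᶜ := by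
      ext ω; simp [lt_top_iff_ne_top]
    refine le_antisymm prob_le_one ?_
    have h1 : (1 : ℝ≥0∞) = μ Set.univ := (measure_univ (μ := μ)).symm
    calc (1 : ℝ≥0∞) = μ Set.univ := h1
      _ = μ ({ω | T ω = ⊤}ᶜ ∪ {ω | T ω = ⊤}) := by rw [Set.compl_union_self]
      _ ≤ μ {ω | T ω = ⊤}ᶜ + μ {ω | T ω = ⊤} := measure_union_le _ _
      _ = μ {ω | T ω < ⊤} := by rw [hzero, add_zero, heq]
  · rw [hlint]; exact tsum_bound
end

section
/- Let $\{X_i\}_{i=0}^\infty$ be a supermartingale that is $\epsilon$-decreasing until a stopping time $T$, with $c$-bounded differences and $X_0 = m_0 \leq 0$ deterministic. Define $\overline{X}_i = X_i + 2zc$ for a constant $z > 0$, and let $D$ be the stopping time $D = \min(T, \inf\{i : X_i \leq -2zc\})$. If $\{X_i\}$ satisfies $X_{T} \geq 0$ on $\{T = j\}$ for all $j$ (repulsing property), then $\{\overline{X}_i\}$ is an $\epsilon$-ranking supermartingale for $D$, and hence $\mathbb{E}[D] < \infty$. -/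
open MeasureTheory ENNReal

private lemma count_lt_aux (d n : ℕ) (h : d ≤ n) :
    ∑ i ∈ Finset.range n, (if i < d then (1 : ℕ) else 0) = d := by
  induction n with
  | zero => simp_all
  | succ n ih =>
    rw [Finset.sum_range_succ]
    by_cases hd : d ≤ n
    · rw [ih hd, if_neg (by omega)]; ring
    · have hdn : d = n + 1 := by omega
      have h1 : ∀ i ∈ Finset.range n, (if i < d then (1 : ℕ) else 0) = 1 := by
        intro i hi
        exact if_pos (by simp at hi; omega)
      rw [Finset.sum_congr rfl h1, Finset.sum_const, smul_eq_mul, mul_one, if_pos (by omega)]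
      simp
      omega

private lemma enat_cast_eq_tsum (a : ℕ∞) :
    (a : ℝ≥0∞) = ∑' i : ℕ, if (i : ℕ∞) < a then 1 else 0 := by
  cases a with
  | top =>
    have : ∀ i : ℕ, (if (i : ℕ∞) < (⊤ : ℕ∞) then (1 : ℝ≥0∞) else 0) = 1 := by
      intro i; exact if_pos (lt_top_iff_ne_top.2 (by simp))
    rw [tsum_congr this, tsum_const_eq_top_of_ne_zero one_ne_zero]
    simp
  | coe d =>
    have h0 : ∀ i ∉ Finset.range d, (if (i : ℕ∞) < (d : ℕ∞) then (1 : ℝ≥0∞) else 0) = 0 := by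
      intro i hi
      simp only [Finset.mem_range, not_lt] at hi
      exact if_neg (by exact_mod_cast not_lt.2 hi)
    rw [tsum_eq_sum h0]
    have h1 : ∀ i ∈ Finset.range d, (if (i : ℕ∞) < (d : ℕ∞) then (1 : ℝ≥0∞) else 0) = 1 := by
      intro i hi
      simp only [Finset.mem_range] at hi
      exact if_pos (by exact_mod_cast hi)
    rw [Finset.sum_congr rfl h1, Finset.sum_const]
    simp

/-- Shifting a repulsing supermartingale by `2zc` turns it into an `ε`-ranking
supermartingale for the stopping time `D = min(T, first hit of (-∞, -2zc])`,
whence `E[D] < ∞`. -/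
theorem shifted_repulsing_is_ranking
    {Ω : Type*} {m : MeasurableSpace Ω} {μ : Measure Ω} [IsProbabilityMeasure μ]
    (ℱ : Filtration ℕ m) (X : ℕ → Ω → ℝ) (T : Ω → ℕ∞) (ε c z m₀ : ℝ)
    (hε : 0 < ε) (hc : 0 < c) (hz : 0 < z) (hm₀ : m₀ ≤ 0)
    (hstop : ∀ n : ℕ, MeasurableSet[ℱ n] {ω | T ω ≤ n})
    (hsup : Supermartingale X ℱ μ)
    (hdec : ∀ i : ℕ,
      μ[X (i + 1)|ℱ i] ≤ᵐ[μ]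
        fun ω => X i ω - Set.indicator {ω | (i : ℕ∞) < T ω} (fun _ => ε) ω)
    (hrep : ∀ ω (j : ℕ), T ω = j → 0 ≤ X j ω)
    (hbdd : ∀ i, ∀ᵐ ω ∂μ, |X (i + 1) ω - X i ω| < c)
    (hinit : ∀ ω, X 0 ω = m₀)
    (D : Ω → ℕ∞)
    (hD : ∀ ω, D ω = min (T ω) (⨅ (i : ℕ) (_ : X i ω ≤ -(2 * z * c)), (i : ℕ∞))) :
    Supermartingale (fun i ω => X i ω + 2 * z * c) ℱ μ ∧
    (∀ i : ℕ,
      μ[fun ω => X (i + 1) ω + 2 * z * c|ℱ i] ≤ᵐ[μ]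
        fun ω => (X i ω + 2 * z * c) -
          Set.indicator {ω | (i : ℕ∞) < D ω} (fun _ => ε) ω) ∧
    (∀ ω (j : ℕ), (j : ℕ∞) < D ω → 0 ≤ X j ω + 2 * z * c) ∧
    ∫⁻ ω, (D ω : ℝ≥0∞) ∂μ < ⊤ := by
  -- characterization of `j < D ω`
  have hInf : ∀ ω (j : ℕ),
      (j : ℕ∞) < (⨅ (i : ℕ) (_ : X i ω ≤ -(2 * z * c)), (i : ℕ∞)) ↔
        ∀ i ≤ j, ¬ X i ω ≤ -(2 * z * c) := by
    intro ω j
    constructor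
    · intro h i hij hP
      have h1 : (⨅ (i : ℕ) (_ : X i ω ≤ -(2 * z * c)), (i : ℕ∞)) ≤ (i : ℕ∞) :=
        iInf₂_le i hP
      have h2 : (j : ℕ∞) < (i : ℕ∞) := lt_of_lt_of_le h h1
      exact absurd hij (not_le.2 (by exact_mod_cast h2))
    · intro h
      have h1 : ((j + 1 : ℕ) : ℕ∞) ≤ ⨅ (i : ℕ) (_ : X i ω ≤ -(2 * z * c)), (i : ℕ∞) := by
        refine le_iInf₂ fun i hP => ?_
        have : ¬ i ≤ j := fun hij => h i hij hP
        exact_mod_cast Nat.succ_le_of_lt (by omega)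
      exact lt_of_lt_of_le (by exact_mod_cast Nat.lt_succ_self j) h1
  have hlt : ∀ ω (j : ℕ), (j : ℕ∞) < D ω ↔
      ((j : ℕ∞) < T ω ∧ ∀ i ≤ j, ¬ X i ω ≤ -(2 * z * c)) := by
    intro ω j
    rw [hD, lt_min_iff, hInf]
  have hDT : ∀ ω, D ω ≤ T ω := fun ω => by rw [hD]; exact min_le_left _ _
  -- conjunct 1
  refine ⟨?_, ?_, ?_, ?_⟩
  · have := hsup.add ((martingale_const ℱ μ (2 * z * c)).supermartingale)
    exact this
  · -- conjunct 2
    intro i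
    have h1 := hdec i
    have h2 : μ[fun ω => X (i + 1) ω + 2 * z * c|ℱ i] =ᵐ[μ]
        fun ω => (μ[X (i + 1)|ℱ i]) ω + 2 * z * c := by
      have := condExp_add (m := ℱ i) (μ := μ) (hsup.integrable (i + 1))
        (integrable_const (2 * z * c)) (f := X (i + 1)) (g := fun _ => 2 * z * c)
      have hcc : μ[(fun _ : Ω => 2 * z * c)|ℱ i] = fun _ => 2 * z * c :=
        condExp_const (ℱ.le i) _
      filter_upwards [this] with ω hω
      simpa [hcc, Pi.add_def] using hω
    filter_upwards [h1, h2] with ω hω hω'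
    rw [hω']
    have hsub : {ω | (i : ℕ∞) < D ω} ⊆ {ω | (i : ℕ∞) < T ω} := fun ω hω =>
      lt_of_lt_of_le hω (hDT ω)
    have hmono : Set.indicator {ω | (i : ℕ∞) < D ω} (fun _ => ε) ω ≤
        Set.indicator {ω | (i : ℕ∞) < T ω} (fun _ => ε) ω :=
      Set.indicator_le_indicator_of_subset hsub (fun _ => le_of_lt hε) ω
    have := hω
    linarith
  · -- conjunct 3
    intro ω j hj
    have := ((hlt ω j).1 hj).2 j le_rfl
    linarith [not_le.1 this]
  · -- conjunct 4
    set A : ℕ → Set Ω := fun n => {ω | (n : ℕ∞) < D ω} with hAdef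
    have hXm : ∀ n, Measurable[ℱ n] (X n) := fun n => (hsup.stronglyAdapted n).measurable
    have hA : ∀ n, MeasurableSet[ℱ n] (A n) := by
      intro n
      have hset : A n = {ω | (n : ℕ∞) < T ω} ∩ ⋂ i, ⋂ _ : i ≤ n, {ω | ¬ X i ω ≤ -(2 * z * c)} := by
        ext ω
        simp only [hAdef, Set.mem_setOf_eq, Set.mem_inter_iff, Set.mem_iInter]
        exact hlt ω n
      rw [hset]
      refine MeasurableSet.inter ?_ ?_
      · have h1 : {ω | (n : ℕ∞) < T ω} = {ω | T ω ≤ n}ᶜ := by ext ω; simp [not_le]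
        rw [h1]; exact (hstop n).compl
      · refine MeasurableSet.iInter fun i => MeasurableSet.iInter fun hi => ?_
        have h2 : {ω | ¬ X i ω ≤ -(2 * z * c)} = {ω | -(2 * z * c) < X i ω} := by
          ext ω; simp [not_le]
        rw [h2]
        exact ℱ.mono hi _ (measurableSet_lt measurable_const (hXm i))
    have hAm : ∀ n, MeasurableSet (A n) := fun n => ℱ.le n _ (hA n)
    set k : ℕ → Ω → ℕ := fun n ω => ∑ i ∈ Finset.range n, if ω ∈ A i then 1 else 0 with hkdef
    have hkm : ∀ n, Measurable (k n) := fun n =>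
      Finset.measurable_sum _ fun i _ => Measurable.ite (hAm i) measurable_const measurable_const
    have hk_le : ∀ n ω, k n ω ≤ n := by
      intro n ω
      calc k n ω ≤ ∑ i ∈ Finset.range n, 1 :=
            Finset.sum_le_sum fun i _ => by split <;> omega
        _ = n := by simp
    have hk_succ : ∀ n ω, k (n + 1) ω = k n ω + if ω ∈ A n then 1 else 0 := fun n ω =>
      Finset.sum_range_succ _ n
    have hk_mem : ∀ n ω, ω ∈ A n → k n ω = n := by
      intro n ω hω
      have hmem : ∀ i ∈ Finset.range n, (if ω ∈ A i then (1 : ℕ) else 0) = 1 := by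
        intro i hi
        refine if_pos ?_
        simp only [Finset.mem_range] at hi
        have : ((i : ℕ∞)) < (n : ℕ∞) := by exact_mod_cast hi
        exact lt_trans this hω
      show (∑ i ∈ Finset.range n, if ω ∈ A i then (1 : ℕ) else 0) = n
      rw [Finset.sum_congr rfl hmem]; simp
    have hk_not : ∀ n ω, ω ∉ A n → ((k n ω : ℕ∞)) = D ω := by
      intro n ω hω
      have hDn : D ω ≤ (n : ℕ∞) := not_lt.1 hω
      have hDtop : D ω ≠ ⊤ := ne_top_of_le_ne_top (by simp) hDn
      have hd : ((D ω).toNat : ℕ∞) = D ω := ENat.coe_toNat hDtop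
      have hdn : (D ω).toNat ≤ n := by
        rw [← Nat.cast_le (α := ℕ∞), hd]; exact hDn
      have hmem : ∀ i ∈ Finset.range n,
          (if ω ∈ A i then (1 : ℕ) else 0) = if i < (D ω).toNat then 1 else 0 := by
        intro i _
        refine if_congr ?_ rfl rfl
        show (i : ℕ∞) < D ω ↔ i < (D ω).toNat
        rw [← Nat.cast_lt (α := ℕ∞), hd]
      have hk : k n ω = (D ω).toNat := by
        show (∑ i ∈ Finset.range n, if ω ∈ A i then (1 : ℕ) else 0) = (D ω).toNat
        rw [Finset.sum_congr rfl hmem]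
        exact count_lt_aux _ n hdn
      rw [hk, hd]
    set Y : ℕ → Ω → ℝ := fun n ω => X (k n ω) ω with hYdef
    have hYint : ∀ n, Integrable (Y n) μ := by
      intro n
      have hYsum : Y n = fun ω => ∑ j ∈ Finset.range (n + 1), if k n ω = j then X j ω else 0 := by
        funext ω
        rw [Finset.sum_ite_eq (Finset.range (n + 1)) (k n ω) (fun j => X j ω),
          if_pos (Finset.mem_range.2 (Nat.lt_succ_of_le (hk_le n ω)))]
      rw [hYsum]
      refine integrable_finset_sum _ fun j _ => ?_
      have heq : (fun ω => if k n ω = j then X j ω else 0) =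
          Set.indicator {ω | k n ω = j} (X j) := by
        funext ω; simp [Set.indicator_apply]
      rw [heq]
      refine (hsup.integrable j).indicator ?_
      have : {ω | k n ω = j} = k n ⁻¹' {j} := by ext ω; simp
      rw [this]
      exact (hkm n) (measurableSet_singleton j)
    have hYrec : ∀ n ω, Y (n + 1) ω =
        Y n ω + Set.indicator (A n) (fun ω => X (n + 1) ω - X n ω) ω := by
      intro n ω
      by_cases hω : ω ∈ A n
      · have h1 : k n ω = n := hk_mem n ω hω
        have h2 : k (n + 1) ω = n + 1 := by rw [hk_succ, h1, if_pos hω]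
        show X (k (n + 1) ω) ω = X (k n ω) ω + _
        rw [h1, h2, Set.indicator_of_mem hω]
        ring
      · have h2 : k (n + 1) ω = k n ω := by rw [hk_succ, if_neg hω]; ring
        show X (k (n + 1) ω) ω = X (k n ω) ω + _
        rw [h2, Set.indicator_of_notMem hω]
        ring
    have hstep : ∀ n, ∫ ω, Y (n + 1) ω ∂μ ≤ ∫ ω, Y n ω ∂μ - ε * (μ (A n)).toReal := by
      intro n
      have hIndInt : Integrable (Set.indicator (A n) (fun ω => X (n + 1) ω - X n ω)) μ :=
        ((hsup.integrable (n + 1)).sub (hsup.integrable n)).indicator (hAm n)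
      have h1 : ∫ ω, Y (n + 1) ω ∂μ =
          ∫ ω, Y n ω ∂μ + ∫ ω, Set.indicator (A n) (fun ω => X (n + 1) ω - X n ω) ω ∂μ := by
        rw [← integral_add (hYint n) hIndInt]
        exact integral_congr_ae (Filter.Eventually.of_forall fun ω => hYrec n ω)
      rw [h1, integral_indicator (hAm n)]
      have h2 : ∫ ω in A n, (X (n + 1) ω - X n ω) ∂μ =
          ∫ ω in A n, X (n + 1) ω ∂μ - ∫ ω in A n, X n ω ∂μ :=
        integral_sub ((hsup.integrable (n + 1)).integrableOn) ((hsup.integrable n).integrableOn)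
      have h3 : ∫ ω in A n, X (n + 1) ω ∂μ = ∫ ω in A n, (μ[X (n + 1)|ℱ n]) ω ∂μ :=
        (setIntegral_condExp (ℱ.le n) (hsup.integrable (n + 1)) (hA n)).symm
      have hTmeas : MeasurableSet {ω | (n : ℕ∞) < T ω} := by
        have heq : {ω | (n : ℕ∞) < T ω} = {ω | T ω ≤ n}ᶜ := by ext ω; simp [not_le]
        rw [heq]; exact (ℱ.le n _ (hstop n)).compl
      have hIndTint : Integrable (Set.indicator {ω | (n : ℕ∞) < T ω} (fun _ => ε)) μ :=
        (integrable_const ε).indicator hTmeas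
      have h4 : ∫ ω in A n, (μ[X (n + 1)|ℱ n]) ω ∂μ ≤
          ∫ ω in A n, (X n ω - Set.indicator {ω | (n : ℕ∞) < T ω} (fun _ => ε) ω) ∂μ :=
        setIntegral_mono_ae (integrable_condExp.integrableOn)
          (((hsup.integrable n).sub hIndTint).integrableOn) (hdec n)
      have h5 : ∫ ω in A n, (X n ω - Set.indicator {ω | (n : ℕ∞) < T ω} (fun _ => ε) ω) ∂μ =
          ∫ ω in A n, X n ω ∂μ -
            ∫ ω in A n, Set.indicator {ω | (n : ℕ∞) < T ω} (fun _ => ε) ω ∂μ :=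
        integral_sub ((hsup.integrable n).integrableOn) (hIndTint.integrableOn)
      have h6 : ∫ ω in A n, Set.indicator {ω | (n : ℕ∞) < T ω} (fun _ => ε) ω ∂μ =
          ε * (μ (A n)).toReal := by
        have hsub : A n ⊆ {ω | (n : ℕ∞) < T ω} := fun ω hω => lt_of_lt_of_le hω (hDT ω)
        rw [setIntegral_congr_fun (hAm n) (fun ω hω => Set.indicator_of_mem (hsub hω) _),
          setIntegral_const, smul_eq_mul, mul_comm]; rfl
      rw [h2, h3]
      rw [h5, h6] at h4
      linarith
    have hEY0 : ∫ ω, Y 0 ω ∂μ = m₀ := by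
      have h0 : Y 0 = fun _ => m₀ := by
        funext ω
        show X (k 0 ω) ω = m₀
        have : k 0 ω = 0 := by
          show (∑ i ∈ Finset.range 0, if ω ∈ A i then (1 : ℕ) else 0) = 0
          simp
        rw [this, hinit ω]
      rw [h0, integral_const]; simp
    have hmain : ∀ n, ∫ ω, Y n ω ∂μ + ε * ∑ i ∈ Finset.range n, (μ (A i)).toReal ≤ m₀ := by
      intro n
      induction n with
      | zero => simp [hEY0]
      | succ n ih =>
        rw [Finset.sum_range_succ, mul_add]
        linarith [hstep n]
    have hbddall : ∀ᵐ ω ∂μ, ∀ i, |X (i + 1) ω - X i ω| < c := ae_all_iff.2 hbdd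
    set B := min m₀ (-(2 * z * c + c)) with hBdef
    have hYlb : ∀ n, ∀ᵐ ω ∂μ, B ≤ Y n ω := by
      intro n
      filter_upwards [hbddall] with ω hω
      by_cases hA' : ω ∈ A n
      · have h1 : k n ω = n := hk_mem n ω hA'
        have h2 := ((hlt ω n).1 hA').2 n le_rfl
        show B ≤ X (k n ω) ω
        rw [h1]
        have h3 := not_le.1 h2
        have hB1 : B ≤ -(2 * z * c + c) := min_le_right _ _
        linarith
      · have hd := hk_not n ω hA'
        rcases eq_or_ne (k n ω) 0 with h0 | hne
        · show B ≤ X (k n ω) ω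
          rw [h0, hinit ω]
          exact min_le_left _ _
        · obtain ⟨d', hsucc⟩ := Nat.exists_eq_succ_of_ne_zero hne
          have hd'lt : (d' : ℕ∞) < D ω := by
            rw [← hd]
            exact_mod_cast (by omega : d' < k n ω)
          have h2 := ((hlt ω d').1 hd'lt).2 d' le_rfl
          have h3 := abs_lt.1 (hω d')
          have h4 := not_le.1 h2
          show B ≤ X (k n ω) ω
          rw [hsucc]
          have hB1 : B ≤ -(2 * z * c + c) := min_le_right _ _
          linarith [h3.1]
    have hBlb : ∀ n, B ≤ ∫ ω, Y n ω ∂μ := by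
      intro n
      have h1 := integral_mono_ae (integrable_const B) (hYint n) (hYlb n)
      simpa using h1
    have hsum : ∀ n, ∑ i ∈ Finset.range n, (μ (A i)).toReal ≤ (m₀ - B) / ε := by
      intro n
      rw [le_div_iff₀ hε, mul_comm]
      linarith [hmain n, hBlb n]
    have hDcast : ∀ ω, ((D ω : ℝ≥0∞)) = ∑' i : ℕ, Set.indicator (A i) (fun _ => (1 : ℝ≥0∞)) ω := by
      intro ω
      rw [enat_cast_eq_tsum]
      refine tsum_congr fun i => ?_
      simp [Set.indicator_apply, hAdef]
    calc ∫⁻ ω, (D ω : ℝ≥0∞) ∂μ = ∑' i, μ (A i) := by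
          rw [lintegral_congr hDcast,
            lintegral_tsum fun i => ((measurable_const.indicator (hAm i)).aemeasurable)]
          exact tsum_congr fun i => lintegral_indicator_one (hAm i)
      _ ≤ ENNReal.ofReal ((m₀ - B) / ε) := by
          refine Summable.tsum_le_of_sum_le ENNReal.summable fun s => ?_
          obtain ⟨n, hn⟩ := s.exists_nat_subset_range
          calc ∑ i ∈ s, μ (A i) ≤ ∑ i ∈ Finset.range n, μ (A i) :=
                Finset.sum_le_sum_of_subset hn
            _ = ENNReal.ofReal (∑ i ∈ Finset.range n, (μ (A i)).toReal) := by
                rw [ENNReal.ofReal_sum_of_nonneg fun i _ => ENNReal.toReal_nonneg]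
                exact Finset.sum_congr rfl fun i _ =>
                  (ENNReal.ofReal_toReal (measure_ne_top μ _)).symm
            _ ≤ ENNReal.ofReal ((m₀ - B) / ε) := ENNReal.ofReal_le_ofReal (hsum n)
      _ < ⊤ := ofReal_lt_top
end
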